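/- Let d ≥ 1 and let ν₁, …, ν_N be Borel probability measures on ℝ^d with finite second moments, α₁, …, α_N ≥ 0 with Σᵢ αᵢ = 1, and τ > 0, and set V(ρ) = Σᵢ αᵢ W²_{2,ub}(ρ, νᵢ). Suppose (μ_n)_{n ≥ 0} is a sequence of Borel probability measures on ℝ^d with finite second moments such that for every n, there exist couplings γ_{n,i} attaining the infimum defining W²_{2,ub}(μ_n, νᵢ) for each i, and μ_{n+1} = (T̄_n)_#μ_n, where T̄_n(x) = Σᵢ αᵢ ∫ y d(γ_{n,i})_x(y) is the average of the conditional means of the disintegrations γ_{n,i} = μ_n ⊗ (γ_{n,i})_x. Then the sequence n ↦ V(μ_n) is monotone non-increasing. -/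

import Mathlib

open MeasureTheory ENNReal

noncomputable section

/-- Euclidean space ℝ^d. -/
abbrev Ed (d : ℕ) := EuclideanSpace ℝ (Fin d)

/-- The entropy function ψ(t) = t log t − t + 1 (equal to 1 at t = 0 since log 0 = 0). -/
def entropyPsi (t : ℝ) : ℝ := t * Real.log t - t + 1

open Classical in
/-- The Csiszár divergence D_ψ(ρ‖ν) for the entropy function ψ. -/
def Dpsi {d : ℕ} (ρ ν : Measure (Ed d)) : ℝ≥0∞ :=
  if ρ ≪ ν then ∫⁻ y, ENNReal.ofReal (entropyPsi ((ρ.rnDeriv ν) y).toReal) ∂ν else ⊤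

/-- Squared unbalanced Wasserstein cost W²_{2,ub,τ}(μ,ν). -/
def UOTcost {d : ℕ} (τ : ℝ) (μ ν : Measure (Ed d)) : ℝ≥0∞ :=
  ⨅ (π : Measure (Ed d × Ed d)) (_ : π.map Prod.fst = μ),
    (∫⁻ p, ENNReal.ofReal (‖p.1 - p.2‖ ^ 2 / 2) ∂π)
      + ENNReal.ofReal τ * Dpsi (π.map Prod.snd) ν

/-- γ is an optimal coupling for the unbalanced problem W²_{2,ub,τ}(μ,ν). -/
def IsOptimalCoupling {d : ℕ} (τ : ℝ) (μ ν : Measure (Ed d))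
    (γ : Measure (Ed d × Ed d)) : Prop :=
  γ.map Prod.fst = μ ∧
    (∫⁻ p, ENNReal.ofReal (‖p.1 - p.2‖ ^ 2 / 2) ∂γ)
      + ENNReal.ofReal τ * Dpsi (γ.map Prod.snd) ν = UOTcost τ μ ν

/-- The Fréchet objective V(ρ) = Σᵢ αᵢ W²_{2,ub,τ}(ρ, νᵢ). -/
def Vfun {d : ℕ} (τ : ℝ) {N : ℕ} (α : Fin N → ℝ) (ν : Fin N → Measure (Ed d))
    (ρ : Measure (Ed d)) : ℝ≥0∞ :=
  ∑ i, ENNReal.ofReal (α i) * UOTcost τ ρ (ν i)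

open scoped RealInnerProductSpace

/-!
Push each optimal coupling `γᵢ` forward along `(x, y) ↦ (T̄ x, y)`. This is admissible for the
new iterate `T̄_# μ` and leaves the second marginal, hence the divergence term, unchanged, so only
the transport terms change. Disintegrating over `μ`, for each `x` the point `T̄ x` is the
barycenter `Σᵢ αᵢ mᵢ(x)` of the conditional means, and it minimises
`a ↦ Σᵢ αᵢ ∫ ½‖a - y‖² d(γᵢ)ₓ(y)`: moving the base point from `x` to `T̄ x` lowers this sum by
exactly `½‖T̄ x - x‖²`.
-/

lemma ofReal_mul_lintegral_ofReal {α : Type*} [MeasurableSpace α] {K : Measure α} {w : ℝ}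
    (hw : 0 ≤ w) {f : α → ℝ} (hf0 : 0 ≤ f) (hf : w ≠ 0 → Integrable f K) :
    ENNReal.ofReal w * ∫⁻ y, ENNReal.ofReal (f y) ∂K = ENNReal.ofReal (w * ∫ y, f y ∂K) := by
  by_cases hw0 : w = 0
  · simp [hw0]
  · rw [ENNReal.ofReal_mul hw, ofReal_integral_eq_lintegral_ofReal (hf hw0)
      (Filter.Eventually.of_forall hf0)]

section SecondMoment

variable {E : Type*} [NormedAddCommGroup E] [MeasurableSpace E] [BorelSpace E]
  [SecondCountableTopology E]

lemma memLp_two_const_sub_of_integrable_sq {K : Measure E} [IsFiniteMeasure K] {x : E}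
    (h : Integrable (fun y => ‖x - y‖ ^ 2) K) (a : E) : MemLp (fun y => a - y) 2 K := by
  have hx : MemLp (fun y => x - y) 2 K := (memLp_two_iff_integrable_sq_norm (by fun_prop)).2 h
  convert (memLp_const (a - x)).add hx using 1
  funext y
  simp

variable [InnerProductSpace ℝ E] [CompleteSpace E]

lemma integral_norm_sub_sq_div_two {K : Measure E} [IsProbabilityMeasure K] {x : E}
    (h : Integrable (fun y => ‖x - y‖ ^ 2) K) (a : E) :
    ∫ y, ‖a - y‖ ^ 2 / 2 ∂K
      = ∫ y, ‖x - y‖ ^ 2 / 2 ∂K + ⟪a - x, x - ∫ y, y ∂K⟫ + ‖a - x‖ ^ 2 / 2 := by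
  have hx : Integrable (fun y => x - y) K :=
    (memLp_two_const_sub_of_integrable_sq h x).integrable one_le_two
  have hy : Integrable (fun y => y) K := by
    convert (integrable_const x).sub hx using 1
    funext y
    simp
  have hexpand : ∀ y, ‖a - y‖ ^ 2 / 2 = ‖x - y‖ ^ 2 / 2 + ⟪a - x, x - y⟫ + ‖a - x‖ ^ 2 / 2 := by
    intro y
    rw [← sub_add_sub_cancel a x y, norm_add_sq_real]
    ring
  rw [integral_congr_ae (Filter.Eventually.of_forall hexpand),
    integral_add (by fun_prop) (integrable_const _), integral_add (h.div_const 2)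
    (hx.const_inner _), integral_const, integral_inner hx, integral_sub (integrable_const x) hy,
    integral_const]
  simp

lemma sum_mul_integral_norm_barycenter_sub_sq {ι : Type*} [Fintype ι] {w : ι → ℝ}
    (hw : ∑ i, w i = 1) (K : ι → Measure E) [∀ i, IsProbabilityMeasure (K i)] (x : E)
    (hK : ∀ i, w i ≠ 0 → Integrable (fun y => ‖x - y‖ ^ 2) (K i)) :
    ∑ i, w i * ∫ y, ‖(∑ j, w j • ∫ z, z ∂K j) - y‖ ^ 2 / 2 ∂K i
      = ∑ i, w i * ∫ y, ‖x - y‖ ^ 2 / 2 ∂K i - ‖(∑ j, w j • ∫ z, z ∂K j) - x‖ ^ 2 / 2 := by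
  set T := ∑ j, w j • ∫ z, z ∂K j
  have hterm : ∀ i, w i * ∫ y, ‖T - y‖ ^ 2 / 2 ∂K i
      = w i * ∫ y, ‖x - y‖ ^ 2 / 2 ∂K i + w i * ⟪T - x, x - ∫ z, z ∂K i⟫
        + w i * (‖T - x‖ ^ 2 / 2) := by
    intro i
    by_cases hwi : w i = 0
    · simp [hwi]
    · rw [integral_norm_sub_sq_div_two (hK i hwi)]
      ring
  have hcross : ∑ i, w i * ⟪T - x, x - ∫ z, z ∂K i⟫ = -‖T - x‖ ^ 2 := by
    simp_rw [← real_inner_smul_right, ← inner_sum, smul_sub, Finset.sum_sub_distrib,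
      ← Finset.sum_smul, hw, one_smul]
    rw [← neg_sub T x, inner_neg_right, real_inner_self_eq_norm_sq]
  simp_rw [hterm, Finset.sum_add_distrib, hcross, ← Finset.sum_mul, hw]
  ring

lemma sum_ofReal_mul_lintegral_barycenter_le {ι : Type*} [Fintype ι] {w : ι → ℝ}
    (hw0 : ∀ i, 0 ≤ w i) (hw : ∑ i, w i = 1) (K : ι → Measure E)
    [∀ i, IsProbabilityMeasure (K i)] (x : E) :
    ∑ i, ENNReal.ofReal (w i) *
        ∫⁻ y, ENNReal.ofReal (‖(∑ j, w j • ∫ z, z ∂K j) - y‖ ^ 2 / 2) ∂K i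
      ≤ ∑ i, ENNReal.ofReal (w i) * ∫⁻ y, ENNReal.ofReal (‖x - y‖ ^ 2 / 2) ∂K i := by
  by_cases hfin : ∑ i, ENNReal.ofReal (w i) * ∫⁻ y, ENNReal.ofReal (‖x - y‖ ^ 2 / 2) ∂K i = ⊤
  · exact hfin ▸ le_top
  have hK : ∀ i, w i ≠ 0 → Integrable (fun y => ‖x - y‖ ^ 2) (K i) := by
    intro i hwi
    have hterm := ENNReal.sum_ne_top.1 hfin i (Finset.mem_univ i)
    have hlin : ∫⁻ y, ENNReal.ofReal (‖x - y‖ ^ 2 / 2) ∂K i ≠ ⊤ := fun h =>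
      hterm (by rw [h, ENNReal.mul_top (by simpa using (hw0 i).lt_of_ne' hwi)])
    have := (lintegral_ofReal_ne_top_iff_integrable (by fun_prop)
      (Filter.Eventually.of_forall fun y => by positivity)).1 hlin
    convert this.const_mul 2 using 1
    funext y
    ring
  have hconv : ∀ a, ∑ i, ENNReal.ofReal (w i) * ∫⁻ y, ENNReal.ofReal (‖a - y‖ ^ 2 / 2) ∂K i
      = ENNReal.ofReal (∑ i, w i * ∫ y, ‖a - y‖ ^ 2 / 2 ∂K i) := by
    intro a
    rw [ENNReal.ofReal_sum_of_nonneg fun i _ => mul_nonneg (hw0 i) (by positivity)]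
    refine Finset.sum_congr rfl fun i _ => ofReal_mul_lintegral_ofReal (hw0 i)
      (fun _ => by positivity) fun hwi => ?_
    exact ((memLp_two_iff_integrable_sq_norm (by fun_prop)).1
      (memLp_two_const_sub_of_integrable_sq (hK i hwi) a)).div_const 2
  rw [hconv, hconv, sum_mul_integral_norm_barycenter_sub_sq hw K x hK]
  exact ENNReal.ofReal_le_ofReal (sub_le_self _ (by positivity))

end SecondMoment

section BarycentricMap

variable {E : Type*} [NormedAddCommGroup E] [NormedSpace ℝ E] [MeasurableSpace E] [BorelSpace E]
  [SecondCountableTopology E] [StandardBorelSpace E] {ι : Type*} [Fintype ι]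

def barycentricMap (w : ι → ℝ) (γ : ι → Measure (E × E)) [∀ i, IsFiniteMeasure (γ i)]
    (x : E) : E :=
  ∑ i, w i • ∫ y, y ∂(γ i).condKernel x

lemma measurable_barycentricMap (w : ι → ℝ) (γ : ι → Measure (E × E))
    [∀ i, IsFiniteMeasure (γ i)] : Measurable (barycentricMap w γ) := by
  have hmean : ∀ i, Measurable fun x => ∫ y, y ∂(γ i).condKernel x := fun i =>
    (measurable_snd.stronglyMeasurable.integral_kernel_prod_right'
      (κ := (γ i).condKernel)).measurable
  unfold barycentricMap
  fun_prop

end BarycentricMap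

section BarycentricMapTransport

variable {E : Type*} [NormedAddCommGroup E] [InnerProductSpace ℝ E] [CompleteSpace E]
  [MeasurableSpace E] [BorelSpace E] [SecondCountableTopology E] [StandardBorelSpace E]
  {ι : Type*} [Fintype ι]

lemma sum_lintegral_barycentricMap_le {w : ι → ℝ}
    (hw0 : ∀ i, 0 ≤ w i) (hw : ∑ i, w i = 1) {μ : Measure E} (γ : ι → Measure (E × E))
    [∀ i, IsFiniteMeasure (γ i)] (hγ : ∀ i, (γ i).fst = μ) :
    ∑ i, ENNReal.ofReal (w i) *
        ∫⁻ p, ENNReal.ofReal (‖barycentricMap w γ p.1 - p.2‖ ^ 2 / 2) ∂γ i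
      ≤ ∑ i, ENNReal.ofReal (w i) * ∫⁻ p, ENNReal.ofReal (‖p.1 - p.2‖ ^ 2 / 2) ∂γ i := by
  have hdisint : ∀ f : ι → E × E → ℝ≥0∞, (∀ i, Measurable (f i)) →
      ∑ i, ENNReal.ofReal (w i) * ∫⁻ p, f i p ∂γ i
        = ∫⁻ x, ∑ i, ENNReal.ofReal (w i) * ∫⁻ y, f i (x, y) ∂(γ i).condKernel x ∂μ := by
    intro f hf
    rw [lintegral_finsetSum _ fun i _ => (hf i).lintegral_kernel_prod_right'.const_mul _]
    refine Finset.sum_congr rfl fun i _ => ?_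
    rw [lintegral_const_mul _ (hf i).lintegral_kernel_prod_right', ← hγ i,
      Measure.lintegral_condKernel (hf i)]
  have hbary := measurable_barycentricMap w γ
  rw [hdisint _ fun i => by fun_prop, hdisint _ fun i => by fun_prop]
  refine lintegral_mono fun x => ?_
  dsimp only
  exact sum_ofReal_mul_lintegral_barycenter_le hw0 hw (fun i => (γ i).condKernel x) x

end BarycentricMapTransport

lemma UOTcost_map_le {d : ℕ} (τ : ℝ) {μ ν : Measure (Ed d)} {γ : Measure (Ed d × Ed d)}
    (hγ : γ.map Prod.fst = μ) {T : Ed d → Ed d} (hT : Measurable T) :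
    UOTcost τ (μ.map T) ν
      ≤ ∫⁻ p, ENNReal.ofReal (‖T p.1 - p.2‖ ^ 2 / 2) ∂γ
        + ENNReal.ofReal τ * Dpsi (γ.map Prod.snd) ν := by
  have hg : Measurable (Prod.map T (@id (Ed d))) := hT.prodMap measurable_id
  refine iInf₂_le_of_le (γ.map (Prod.map T id)) ?_ (le_of_eq ?_)
  · rw [Measure.map_map measurable_fst hg, ← hγ, Measure.map_map hT measurable_fst]
    rfl
  · rw [Measure.map_map measurable_snd hg, lintegral_map (by fun_prop) hg]
    rfl

theorem fixed_point_iteration_objective_antitone_general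
    {d N : ℕ} (τ : ℝ)
    (ν : Fin N → Measure (Ed d))
    (α : Fin N → ℝ) (hα : ∀ i, 0 ≤ α i) (hαsum : ∑ i, α i = 1)
    (μ : ℕ → Measure (Ed d))
    (γ : ℕ → Fin N → Measure (Ed d × Ed d)) [∀ n i, IsFiniteMeasure (γ n i)]
    (hγ : ∀ n i, IsOptimalCoupling τ (μ n) (ν i) (γ n i))
    (Tbar : ℕ → Ed d → Ed d)
    (hTbar : ∀ n x, Tbar n x = ∑ i, α i • ∫ y, y ∂((γ n i).condKernel x))
    (hiter : ∀ n, μ (n + 1) = (μ n).map (Tbar n)) :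
    Antitone (fun n => Vfun τ α ν (μ n)) := by
  refine antitone_nat_of_succ_le fun n => ?_
  have hT : Tbar n = barycentricMap α (γ n) := funext (hTbar n)
  calc Vfun τ α ν (μ (n + 1))
      ≤ ∑ i, ENNReal.ofReal (α i) *
          ((∫⁻ p, ENNReal.ofReal (‖barycentricMap α (γ n) p.1 - p.2‖ ^ 2 / 2) ∂(γ n i))
            + ENNReal.ofReal τ * Dpsi ((γ n i).map Prod.snd) (ν i)) := by
        rw [Vfun, hiter, hT]
        gcongr with i
        exact UOTcost_map_le τ (hγ n i).1 (measurable_barycentricMap α (γ n))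
    _ ≤ ∑ i, ENNReal.ofReal (α i) *
          ((∫⁻ p, ENNReal.ofReal (‖p.1 - p.2‖ ^ 2 / 2) ∂(γ n i))
            + ENNReal.ofReal τ * Dpsi ((γ n i).map Prod.snd) (ν i)) := by
        simp only [mul_add, Finset.sum_add_distrib]
        gcongr ?_ + _
        exact sum_lintegral_barycentricMap_le hα hαsum (γ n) fun i => (hγ n i).1
    _ = Vfun τ α ν (μ n) := Finset.sum_congr rfl fun i _ => by rw [(hγ n i).2]

theorem fixed_point_iteration_objective_antitone
    {d N : ℕ} (hd : 1 ≤ d) (τ : ℝ) (hτ : 0 < τ)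
    (ν : Fin N → Measure (Ed d)) [∀ i, IsProbabilityMeasure (ν i)]
    (hν : ∀ i, Integrable (fun x => ‖x‖ ^ 2) (ν i))
    (α : Fin N → ℝ) (hα : ∀ i, 0 ≤ α i) (hαsum : ∑ i, α i = 1)
    (μ : ℕ → Measure (Ed d)) [∀ n, IsProbabilityMeasure (μ n)]
    (hμ : ∀ n, Integrable (fun x => ‖x‖ ^ 2) (μ n))
    (γ : ℕ → Fin N → Measure (Ed d × Ed d)) [∀ n i, IsFiniteMeasure (γ n i)]
    (hγ : ∀ n i, IsOptimalCoupling τ (μ n) (ν i) (γ n i))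
    (Tbar : ℕ → Ed d → Ed d)
    (hTbar : ∀ n x, Tbar n x = ∑ i, α i • ∫ y, y ∂((γ n i).condKernel x))
    (hiter : ∀ n, μ (n + 1) = (μ n).map (Tbar n)) :
    Antitone (fun n => Vfun τ α ν (μ n)) :=
  fixed_point_iteration_objective_antitone_general τ ν α hα hαsum μ γ hγ Tbar hTbar hiter

end
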